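/- Let M be an invertible d×d matrix over K with columns f₁, …, f_d. The following are equivalent: (a) there exist integers a₁, …, a_d such that the R-submodule of K^d generated by z^{a₁}f₁, …, z^{a_d}f_d equals the standard lattice R^d; (b) there exist integers a₁, …, a_d such that the matrix G = M · diag(z^{a₁}, …, z^{a_d}) has all entries in R and its matrix of constant coefficients G(0) ∈ ℂ^{d×d} is invertible; (c) for all i, j ∈ {1,…,d}, min_{1 ≤ k ≤ d} ( val(M_{ik}) + val((M^{-1})_{kj}) ) ≥ 0, the arithmetic and minimum taken in ℤ ∪ {∞}. -/

import Mathlib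

/-
Put `G = M · diag(z^{a₁}, …, z^{a_d})`. The `R`-span of the columns of `G` is `R^d` exactly when
`G` and `G⁻¹` both have entries in `R`, and a matrix over `R = ℂ[[z]]` is invertible over `R`
exactly when its constant term `G(0)` is. Since `G⁻¹ = diag(z^{-a₁}, …, z^{-a_d}) · M⁻¹`, both
(a) and (b) ask for integers with `val(M_{ik}) + a_k ≥ 0` and `val((M⁻¹)_{kj}) - a_k ≥ 0`; these
exist iff `val(M_{ik}) + val((M⁻¹)_{kj}) ≥ 0` for all `i, j, k`, taking `a_k = -min_i val(M_{ik})`,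
which is finite because no column of `M` vanishes.
-/

open Matrix

noncomputable section
set_option synthInstance.maxHeartbeats 1000000
set_option maxHeartbeats 1000000

abbrev K := LaurentSeries ℂ

abbrev Rring : Subring K := (HahnSeries.ofPowerSeries ℤ ℂ).range

def z : K := HahnSeries.single 1 1

open Classical in
def zval (c : K) : WithTop ℤ := if c = 0 then ⊤ else ((c.order : ℤ) : WithTop ℤ)

lemma zval_eq_orderTop (x : K) : zval x = x.orderTop := by
  unfold zval
  split_ifs with hx
  · simp [hx]
  · exact HahnSeries.order_eq_orderTop_of_ne_zero hx

lemma zval_mul (x y : K) : zval (x * y) = zval x + zval y := by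
  simp only [zval_eq_orderTop, HahnSeries.orderTop_mul]

lemma zval_z_zpow (n : ℤ) : zval (z ^ n) = n := by
  rw [zval_eq_orderTop, z, ← RatFunc.single_zpow, HahnSeries.orderTop_single one_ne_zero]

lemma zval_mul_z_zpow (x : K) (n : ℤ) : zval (x * z ^ n) = zval x + n := by
  rw [zval_mul, zval_z_zpow]

lemma mem_Rring_iff_zval_nonneg {x : K} : x ∈ Rring ↔ 0 ≤ zval x := by
  rw [zval_eq_orderTop]
  constructor
  · rintro ⟨p, rfl⟩
    refine HahnSeries.le_orderTop_iff_forall.2 fun j hj => ?_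
    rw [show HahnSeries.ofPowerSeries ℤ ℂ p = (p : K) from rfl, PowerSeries.coeff_coe,
      if_pos (WithTop.coe_lt_coe.1 hj)]
  · intro h
    refine ⟨PowerSeries.X ^ x.order.toNat * x.powerSeriesPart, ?_⟩
    rw [map_mul, HahnSeries.ofPowerSeries_X_pow,
      Int.toNat_of_nonneg (HahnSeries.zero_le_orderTop_iff.1 h),
      LaurentSeries.single_order_mul_powerSeriesPart]

lemma zval_eq_top_iff {x : K} : zval x = ⊤ ↔ x = 0 := by
  rw [zval_eq_orderTop, HahnSeries.orderTop_eq_top]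

lemma exists_shift_nonneg_iff {ι κ ν : Type*} [Finite ι] (u : ι → κ → WithTop ℤ)
    (v : κ → ν → WithTop ℤ) (hu : ∀ k, ∃ i, u i k ≠ ⊤) :
    (∃ a : κ → ℤ, (∀ i k, 0 ≤ u i k + a k) ∧ ∀ k j, 0 ≤ v k j + (-a k : ℤ)) ↔
      ∀ i j k, 0 ≤ u i k + v k j := by
  constructor
  · rintro ⟨a, hua, hva⟩ i j k
    calc 0 ≤ (u i k + a k) + (v k j + (-a k : ℤ)) := add_nonneg (hua i k) (hva k j)
      _ = u i k + v k j := by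
        rw [add_add_add_comm, ← WithTop.coe_add, add_neg_cancel, WithTop.coe_zero, add_zero]
  · intro huv
    have hmin : ∀ k, ∃ m : ℤ, (∃ i, u i k = m) ∧ ∀ i, (m : WithTop ℤ) ≤ u i k := by
      intro k
      obtain ⟨i, hi⟩ := hu k
      have : Nonempty ι := ⟨i⟩
      obtain ⟨i₀, hi₀⟩ := Finite.exists_min fun i => u i k
      obtain ⟨m, hm⟩ := WithTop.ne_top_iff_exists.1 (ne_top_of_le_ne_top hi (hi₀ i))
      exact ⟨m, ⟨i₀, hm.symm⟩, hm ▸ hi₀⟩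
    choose m hm using hmin
    refine ⟨fun k => -m k, fun i k => ?_, fun k j => ?_⟩
    · calc (0 : WithTop ℤ) = (m k : WithTop ℤ) + (-m k : ℤ) := by
            rw [← WithTop.coe_add, add_neg_cancel, WithTop.coe_zero]
        _ ≤ u i k + (-m k : ℤ) := by gcongr; exact (hm k).2 i
    · obtain ⟨i, hi⟩ := (hm k).1
      simpa [← hi, add_comm] using huv i j k

section Matrices

variable {ι : Type*} [Fintype ι] [DecidableEq ι]

omit [Fintype ι] [DecidableEq ι] in
lemma exists_map_ofPowerSeries_eq {G : Matrix ι ι K} (hG : ∀ i j, G i j ∈ Rring) :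
    ∃ G₁ : Matrix ι ι (PowerSeries ℂ), G₁.map (HahnSeries.ofPowerSeries ℤ ℂ) = G := by
  choose G₁ hG₁ using hG
  exact ⟨of G₁, ext hG₁⟩

lemma isUnit_det_coeff_zero_iff (G₁ : Matrix ι ι (PowerSeries ℂ)) :
    IsUnit (of fun i j => (HahnSeries.ofPowerSeries ℤ ℂ (G₁ i j)).coeff 0).det ↔
      IsUnit G₁.det := by
  rw [PowerSeries.isUnit_iff_constantCoeff, RingHom.map_det]
  congr!
  ext i j
  simpa using HahnSeries.ofPowerSeries_apply_coeff (Γ := ℤ) (G₁ i j) 0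

lemma exists_integral_right_inv_iff {G : Matrix ι ι K} (hG : ∀ i j, G i j ∈ Rring) :
    (∃ N : Matrix ι ι K, (∀ i j, N i j ∈ Rring) ∧ G * N = 1) ↔
      IsUnit (of fun i j => (G i j).coeff 0).det := by
  obtain ⟨G₁, rfl⟩ := exists_map_ofPowerSeries_eq hG
  refine Iff.trans ⟨?_, fun h => ?_⟩ (isUnit_det_coeff_zero_iff G₁).symm
  · rintro ⟨N, hN, hGN⟩
    obtain ⟨N₁, rfl⟩ := exists_map_ofPowerSeries_eq hN
    refine isUnit_det_of_right_inverse (B := N₁)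
      (map_injective (HahnSeries.ofPowerSeries_injective (Γ := ℤ)) ?_)
    dsimp only
    rw [Matrix.map_mul, hGN, Matrix.map_one _ (map_zero _) (map_one _)]
  · refine ⟨G₁⁻¹.map (HahnSeries.ofPowerSeries ℤ ℂ), fun i j => ⟨_, rfl⟩, ?_⟩
    rw [← Matrix.map_mul, mul_nonsing_inv _ h, Matrix.map_one _ (map_zero _) (map_one _)]

omit [DecidableEq ι] in
lemma mem_span_columns_iff {G : Matrix ι ι K} {x : ι → K} :
    x ∈ Submodule.span Rring (Set.range fun j i => G i j) ↔
      ∃ v : ι → K, (∀ k, v k ∈ Rring) ∧ G *ᵥ v = x := by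
  have hmulVec : ∀ v : ι → K, G *ᵥ v = ∑ k, v k • fun i => G i k := by
    intro v
    ext i
    simp [mulVec, dotProduct, Finset.sum_apply, mul_comm]
  rw [Submodule.mem_span_range_iff_exists_fun]
  constructor
  · rintro ⟨c, rfl⟩
    exact ⟨fun k => c k, fun k => (c k).2, hmulVec _⟩
  · rintro ⟨v, hv, rfl⟩
    exact ⟨fun k => ⟨v k, hv k⟩, (hmulVec v).symm⟩

lemma mem_span_pi_single_iff {x : ι → K} :
    x ∈ Submodule.span Rring (Set.range fun j => (Pi.single j 1 : ι → K)) ↔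
      ∀ i, x i ∈ Rring := by
  have hone : (fun j => (Pi.single j 1 : ι → K)) = fun j i => (1 : Matrix ι ι K) i j := by
    ext j i
    rw [one_apply, Pi.single_apply]
  rw [hone, mem_span_columns_iff]
  simp only [one_mulVec, exists_eq_right]

lemma exists_integral_right_inv_iff_forall_pi_single {G : Matrix ι ι K} :
    (∃ N : Matrix ι ι K, (∀ i j, N i j ∈ Rring) ∧ G * N = 1) ↔
      ∀ j, ∃ v : ι → K, (∀ k, v k ∈ Rring) ∧ G *ᵥ v = Pi.single j 1 := by
  constructor
  · rintro ⟨N, hN, hGN⟩ j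
    refine ⟨fun k => N k j, fun k => hN k j, funext fun i => ?_⟩
    have h := congrFun (congrFun hGN i) j
    rw [one_apply] at h
    rw [Pi.single_apply]
    exact h
  · intro h
    choose v hv hGv using h
    refine ⟨of fun k j => v j k, fun k j => hv j k, ext fun i j => ?_⟩
    have h := congrFun (hGv j) i
    rw [Pi.single_apply] at h
    rw [one_apply]
    exact h

lemma span_columns_eq_span_pi_single_iff {G : Matrix ι ι K} :
    Submodule.span Rring (Set.range fun j i => G i j) =
        Submodule.span Rring (Set.range fun j => (Pi.single j 1 : ι → K)) ↔
      (∀ i j, G i j ∈ Rring) ∧ ∃ N : Matrix ι ι K, (∀ i j, N i j ∈ Rring) ∧ G * N = 1 := by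
  rw [le_antisymm_iff, Submodule.span_le, Submodule.span_le, Set.range_subset_iff,
    Set.range_subset_iff, exists_integral_right_inv_iff_forall_pi_single, forall_comm]
  simp only [SetLike.mem_coe, mem_span_pi_single_iff, mem_span_columns_iff]

omit [Fintype ι] [DecidableEq ι] in
lemma range_zpow_smul_columns (M : Matrix ι ι K) (a : ι → ℤ) :
    (Set.range fun j => z ^ (a j) • fun i => M i j) =
      Set.range fun j i => M i j * z ^ (a j) := by
  congr
  ext j i
  simp [mul_comm]

lemma exists_integral_right_inv_rescale_iff {M : Matrix ι ι K} (hM : IsUnit M.det) (a : ι → ℤ) :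
    (∃ N : Matrix ι ι K, (∀ i j, N i j ∈ Rring) ∧ (of fun i j => M i j * z ^ (a j)) * N = 1) ↔
      ∀ k j, M⁻¹ k j * z ^ (-a k) ∈ Rring := by
  have hz : z ≠ 0 := HahnSeries.single_ne_zero one_ne_zero
  have hD : diagonal (fun k => z ^ (a k)) * diagonal (fun k => z ^ (-a k)) = 1 := by
    rw [diagonal_mul_diagonal, ← diagonal_one]
    congr 1
    funext k
    rw [← zpow_add₀ hz, add_neg_cancel, zpow_zero]
  have hG : (of fun i j => M i j * z ^ (a j)) = M * diagonal fun k => z ^ (a k) := by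
    ext i j
    rw [mul_diagonal, of_apply]
  have hN₀ : (of fun k j => M⁻¹ k j * z ^ (-a k)) = (diagonal fun k => z ^ (-a k)) * M⁻¹ := by
    ext k j
    rw [diagonal_mul, of_apply, mul_comm]
  have hinv : (of fun i j => M i j * z ^ (a j)) * (of fun k j => M⁻¹ k j * z ^ (-a k)) = 1 := by
    rw [hG, hN₀, mul_assoc, ← mul_assoc (diagonal _), hD, one_mul, mul_nonsing_inv _ hM]
  constructor
  · rintro ⟨N, hN, hGN⟩
    obtain rfl := (inv_eq_right_inv hinv).symm.trans (inv_eq_right_inv hGN)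
    exact hN
  · exact fun h => ⟨_, h, hinv⟩

lemma rescale_integral_and_isUnit_iff {M : Matrix ι ι K} (hM : IsUnit M.det) (a : ι → ℤ) :
    ((∀ i j, M i j * z ^ (a j) ∈ Rring) ∧
        IsUnit (of fun i j => (M i j * z ^ (a j)).coeff 0).det) ↔
      (∀ i k, 0 ≤ zval (M i k) + a k) ∧ ∀ k j, 0 ≤ zval (M⁻¹ k j) + (-a k : ℤ) := by
  have hG : (∀ i j, M i j * z ^ (a j) ∈ Rring) ↔ ∀ i k, 0 ≤ zval (M i k) + a k := by
    simp only [mem_Rring_iff_zval_nonneg, zval_mul_z_zpow]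
  rw [← hG]
  refine and_congr_right fun hG' => ?_
  refine (exists_integral_right_inv_iff hG').symm.trans
    ((exists_integral_right_inv_rescale_iff hM a).trans ?_)
  simp only [mem_Rring_iff_zval_nonneg, zval_mul_z_zpow]

lemma exists_zval_ne_top_of_isUnit_det {M : Matrix ι ι K} (hM : IsUnit M.det) (k : ι) :
    ∃ i, zval (M i k) ≠ ⊤ := by
  by_contra! h
  exact hM.ne_zero (det_eq_zero_of_column_eq_zero k fun i => zval_eq_top_iff.1 (h i))

end Matrices

theorem standard_lattice_mem_apartment_iff {d : ℕ}
    (M : Matrix (Fin d) (Fin d) K) (hM : IsUnit M.det) :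
    ((∃ a : Fin d → ℤ,
        Submodule.span Rring (Set.range fun j => z ^ (a j) • fun i => M i j) =
          Submodule.span Rring (Set.range fun j : Fin d => (Pi.single j 1 : Fin d → K))) ↔
      (∀ i j : Fin d, (0 : WithTop ℤ) ≤
        Finset.univ.inf fun k => zval (M i k) + zval (M⁻¹ k j))) ∧
    ((∃ a : Fin d → ℤ,
        (∀ i j : Fin d, M i j * z ^ (a j) ∈ Rring) ∧
        IsUnit (Matrix.of fun i j : Fin d => (M i j * z ^ (a j)).coeff 0).det) ↔
      (∀ i j : Fin d, (0 : WithTop ℤ) ≤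
        Finset.univ.inf fun k => zval (M i k) + zval (M⁻¹ k j))) := by
  have hbc : (∃ a : Fin d → ℤ, (∀ i j : Fin d, M i j * z ^ (a j) ∈ Rring) ∧
        IsUnit (Matrix.of fun i j : Fin d => (M i j * z ^ (a j)).coeff 0).det) ↔
      ∀ i j : Fin d, (0 : WithTop ℤ) ≤ Finset.univ.inf fun k => zval (M i k) + zval (M⁻¹ k j) := by
    simp only [rescale_integral_and_isUnit_iff hM, Finset.le_inf_iff, Finset.mem_univ,
      forall_const]
    exact exists_shift_nonneg_iff _ _ (exists_zval_ne_top_of_isUnit_det hM)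
  refine ⟨(exists_congr fun a => ?_).trans hbc, hbc⟩
  rw [range_zpow_smul_columns]
  exact span_columns_eq_span_pi_single_iff.trans (and_congr_right exists_integral_right_inv_iff)
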